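/- arXiv:0707.4633 — 2 statements merged into one kernel-verified Lean document; each statement's English description precedes it below -/
import Mathlib

section
/- Under the bijection φ from 2-1-3-avoiding permutations to Dyck paths, π avoids the barred pattern 2̄-31 if and only if the Dyck path φ(π) contains no three consecutive steps UDU. -/
/-- `π` contains the classical pattern 2-1-3: indices `i < j < k` with `π j < π i < π k`. -/
def Contains213 {n : ℕ} (π : Equiv.Perm (Fin n)) : Prop :=
  ∃ i j k : Fin n, i < j ∧ j < k ∧ π j < π i ∧ π i < π k

/-- `π` avoids the barred pattern 2̄-31: every descent `π i > π (i+1)` has some `j < i`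
with `π (i+1) < π j < π i`. -/
def AvoidsBarred231 {n : ℕ} (π : Equiv.Perm (Fin n)) : Prop :=
  ∀ i i' : Fin n, (i' : ℕ) = (i : ℕ) + 1 → π i' < π i →
    ∃ j : Fin n, j < i ∧ π i' < π j ∧ π j < π i

/-- The sorted list of positions of right-to-left maxima of `π`. -/
def rlMaxima {n : ℕ} (π : Equiv.Perm (Fin n)) : List (Fin n) :=
  (Finset.univ.filter fun i : Fin n => ∀ j, i < j → π j < π i).sort (· ≤ ·)

/-- The map `φ` sending a permutation with right-to-left maxima at positions
`i₁ < i₂ < ⋯ < i_m = n` to the lattice path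
`U^{i₁} D^{π_{i₁}-π_{i₂}} U^{i₂-i₁} ⋯ U^{i_m-i_{m-1}} D^{π_{i_m}}`
(positions and values of `Fin n` are 0-indexed, hence the `+ 1`'s). -/
def phi {n : ℕ} (π : Equiv.Perm (Fin n)) : List Bool :=
  match rlMaxima π with
  | [] => []
  | i₁ :: rest =>
      List.replicate ((i₁ : ℕ) + 1) true ++
      (((i₁ :: rest).zip rest).flatMap fun p =>
        List.replicate ((π p.1 : ℕ) - (π p.2 : ℕ)) false ++
        List.replicate ((p.2 : ℕ) - (p.1 : ℕ)) true) ++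
      List.replicate ((π (rest.getLastD i₁) : ℕ) + 1) false

/-! If `π` avoids 2-1-3, every descent top `π i > π (i+1)` is a right-to-left maximum, and the
descent is protected by an earlier value in between iff the value `π i - 1` lies left of `i`;
otherwise `π i - 1` lies right of `i` and is then the next right-to-left maximum. So `π` avoids
2̄-31 iff no two consecutive right-to-left maxima have values differing by one. These differences
are the lengths of the inner down-runs of `φ π`, each between two nonempty up-runs, and `UDU`
occurs iff one of these runs has length one. -/

namespace List

variable {α : Type*}

lemma cons_infix_replicate_append_iff {a b : α} (hab : a ≠ b) (w l : List α) (k : ℕ) :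
    a :: w <:+: replicate k b ++ l ↔ a :: w <:+: l := by
  induction k with
  | zero => simp
  | succ k ih =>
    rw [replicate_succ, cons_append, infix_cons_iff, ih, cons_prefix_cons]
    simp [hab]

lemma cons_cons_infix_replicate_append_iff {a b : α} (hab : a ≠ b) (w l : List α) (k : ℕ) :
    a :: b :: w <:+: replicate k a ++ a :: l ↔ a :: b :: w <:+: a :: l := by
  induction k with
  | zero => simp
  | succ k ih =>
    rw [replicate_succ, cons_append, infix_cons_iff, ih, or_iff_right_iff_imp, cons_prefix_cons]
    rintro ⟨-, h⟩
    cases k <;> simp_all [replicate_succ, cons_prefix_cons, Ne.symm hab]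

lemma rel_of_mem_zip_tail {R : α → α → Prop} {l : List α} (hl : l.Pairwise R) {x y : α}
    (h : (x, y) ∈ l.zip l.tail) : R x y := by
  induction l with
  | nil => simp at h
  | cons a l ih =>
    cases l with
    | nil => simp at h
    | cons b l =>
      rcases mem_cons.mp h with h | h
      · simp only [Prod.mk.injEq] at h
        obtain ⟨rfl, rfl⟩ := h
        exact rel_of_pairwise_cons hl mem_cons_self
      · exact ih hl.of_cons h

lemma mem_zip_tail_of_forall_le [LinearOrder α] {l : List α}
    (hl : l.Pairwise (· < ·)) {x y : α} (hx : x ∈ l) (hy : y ∈ l) (hxy : x < y)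
    (hgap : ∀ z ∈ l, x < z → y ≤ z) : (x, y) ∈ l.zip l.tail := by
  induction l with
  | nil => simp at hx
  | cons a l ih =>
    cases l with
    | nil => simp_all
    | cons b l =>
      have hbl : b :: l ⊆ a :: b :: l := subset_cons_self _ _
      rcases mem_cons.mp hx with rfl | hx
      · have hy : y ∈ b :: l := (mem_cons.mp hy).resolve_left hxy.ne'
        have hyb : y ≤ b := hgap b (hbl mem_cons_self) (rel_of_pairwise_cons hl mem_cons_self)
        rcases mem_cons.mp hy with rfl | hy
        · exact mem_cons_self
        · exact absurd hyb (rel_of_pairwise_cons hl.of_cons hy).not_ge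
      · have hay : a < y := (rel_of_pairwise_cons hl hx).trans hxy
        have hy : y ∈ b :: l := (mem_cons.mp hy).resolve_left hay.ne'
        exact mem_cons_of_mem _ (ih hl.of_cons hx hy fun z hz => hgap z (hbl hz))

end List

open List in
lemma udu_infix_cons_iff {ι : Type*} (down up : ι → ℕ) (ps : List ι)
    (hdown : ∀ p ∈ ps, down p ≠ 0) (hup : ∀ p ∈ ps, up p ≠ 0) (c : ℕ) :
    [true, false, true] <:+: true ::
        (ps.flatMap (fun p => replicate (down p) false ++ replicate (up p) true) ++
          replicate c false) ↔
      ∃ p ∈ ps, down p = 1 := by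
  induction ps with
  | nil =>
    simp only [flatMap_nil, nil_append, not_mem_nil, false_and, exists_false, iff_false]
    intro h
    simpa using h.sublist.count_le true
  | cons p ps ih =>
    specialize ih (fun q hq => hdown q (mem_cons_of_mem _ hq))
      (fun q hq => hup q (mem_cons_of_mem _ hq))
    obtain ⟨d, hd⟩ := Nat.exists_eq_add_one_of_ne_zero (hdown p mem_cons_self)
    obtain ⟨u, hu⟩ := Nat.exists_eq_add_one_of_ne_zero (hup p mem_cons_self)
    rw [flatMap_cons, append_assoc, append_assoc, hd, hu]
    cases d with
    | zero => exact iff_of_true ⟨[], _, rfl⟩ ⟨p, mem_cons_self, hd⟩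
    | succ d =>
      have hp : down p ≠ 1 := by omega
      rw [infix_cons_iff, or_iff_right (by simp [replicate_succ]),
        cons_infix_replicate_append_iff (by decide : true ≠ false), replicate_succ', append_assoc,
        singleton_append, cons_cons_infix_replicate_append_iff (by decide : true ≠ false), ih]
      simp [hp]

section RightToLeftMaxima

variable {n : ℕ} (π : Equiv.Perm (Fin n))

def IsRLMax (i : Fin n) : Prop := ∀ j, i < j → π j < π i

def HasUnitDrop : Prop := ∃ x y : Fin n, x < y ∧ IsRLMax π x ∧ (π y : ℕ) + 1 = π x

variable {π}

lemma mem_rlMaxima {i : Fin n} : i ∈ rlMaxima π ↔ IsRLMax π i := by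
  simp [rlMaxima, IsRLMax]

lemma pairwise_rlMaxima : (rlMaxima π).Pairwise (· < ·) := (Finset.sortedLT_sort _).pairwise

lemma IsRLMax.of_apply_add_one_eq {x y : Fin n} (hx : IsRLMax π x) (hxy : x < y)
    (h : (π y : ℕ) + 1 = π x) : IsRLMax π y := by
  intro z hyz
  have hz : (π z : ℕ) < π x := hx z (hxy.trans hyz)
  have hne : π z ≠ π y := π.injective.ne hyz.ne'
  rw [Fin.lt_def]
  have := Fin.val_ne_of_ne hne
  omega

lemma isRLMax_of_not_contains213 (h : ¬ Contains213 π) {i i' : Fin n}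
    (hi' : (i' : ℕ) = i + 1) (hdesc : π i' < π i) : IsRLMax π i := by
  intro j hij
  by_contra! hj
  have hi'j : i' ≠ j := by rintro rfl; exact hj.not_gt hdesc
  have := Fin.val_ne_of_ne hi'j
  have := Fin.lt_def.mp hij
  exact h ⟨i, i', j, by rw [Fin.lt_def]; omega, by rw [Fin.lt_def]; omega, hdesc,
    lt_of_le_of_ne hj (π.injective.ne hij.ne)⟩

lemma AvoidsBarred231.not_hasUnitDrop (h : ¬ Contains213 π) (hA : AvoidsBarred231 π) :
    ¬ HasUnitDrop π := by
  rintro ⟨x, y, hxy, hx, hyx⟩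
  have hxy' := Fin.lt_def.mp hxy
  obtain ⟨p, hp⟩ : ∃ p : Fin n, (p : ℕ) = x + 1 := ⟨⟨x + 1, by omega⟩, rfl⟩
  have hxp : x < p := Fin.lt_def.mpr (by omega)
  obtain ⟨j, hjx, hpj, hjx'⟩ := hA x p hp (hx p hxp)
  have hjy : π j < π y := by
    have := Fin.val_ne_of_ne (π.injective.ne (hjx.trans hxy).ne)
    have := Fin.lt_def.mp hjx'
    rw [Fin.lt_def]
    omega
  have hpy : p < y := by
    have := Fin.val_ne_of_ne fun e : p = y => (hpj.trans hjy).ne (congrArg π e)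
    rw [Fin.lt_def]
    omega
  exact h ⟨j, p, y, hjx.trans hxp, hpy, hpj, hjy⟩

lemma avoidsBarred231_of_not_hasUnitDrop (h : ¬ Contains213 π) (hU : ¬ HasUnitDrop π) :
    AvoidsBarred231 π := by
  intro i i' hi' hdesc
  have hi := isRLMax_of_not_contains213 h hi' hdesc
  have hdesc' := Fin.lt_def.mp hdesc
  obtain ⟨p, hp⟩ := π.surjective ⟨π i - 1, by omega⟩
  have hpi : (π p : ℕ) + 1 = π i := by rw [hp, Fin.val_mk]; omega
  rcases lt_trichotomy p i with hlt | rfl | hgt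
  · refine ⟨p, hlt, ?_, Fin.lt_def.mpr (by omega)⟩
    have hii' : i < i' := Fin.lt_def.mpr (by omega)
    have := Fin.val_ne_of_ne (π.injective.ne (hlt.trans hii').ne')
    rw [Fin.lt_def]
    omega
  · omega
  · exact absurd ⟨i, p, hgt, hi, hpi⟩ hU

lemma avoidsBarred231_iff_not_hasUnitDrop (h : ¬ Contains213 π) :
    AvoidsBarred231 π ↔ ¬ HasUnitDrop π :=
  ⟨AvoidsBarred231.not_hasUnitDrop h, avoidsBarred231_of_not_hasUnitDrop h⟩

open List in
lemma udu_infix_phi_iff :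
    [true, false, true] <:+: phi π ↔
      ∃ q ∈ (rlMaxima π).zip (rlMaxima π).tail, (π q.1 : ℕ) - π q.2 = 1 := by
  rw [phi]
  split
  next hL => simp [hL]
  next i₁ rest hL =>
    have hzip : ∀ x y, (x, y) ∈ (i₁ :: rest).zip rest → x < y ∧ π y < π x := by
      intro x y hq
      replace hq : (x, y) ∈ (rlMaxima π).zip (rlMaxima π).tail := by rw [hL]; exact hq
      have hlt := rel_of_mem_zip_tail pairwise_rlMaxima hq
      exact ⟨hlt, mem_rlMaxima.mp (of_mem_zip hq).1 _ hlt⟩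
    rw [hL, tail_cons, replicate_succ', append_assoc, append_assoc, singleton_append,
      cons_cons_infix_replicate_append_iff (by decide), udu_infix_cons_iff]
    · intro q hq
      have := Fin.lt_def.mp (hzip q.1 q.2 hq).2
      omega
    · intro q hq
      have := Fin.lt_def.mp (hzip q.1 q.2 hq).1
      omega

lemma hasUnitDrop_iff_exists_mem_zip_tail :
    HasUnitDrop π ↔
      ∃ q ∈ (rlMaxima π).zip (rlMaxima π).tail, (π q.1 : ℕ) - π q.2 = 1 := by
  constructor
  · rintro ⟨x, y, hxy, hx, hyx⟩
    have hy := hx.of_apply_add_one_eq hxy hyx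
    refine ⟨(x, y), List.mem_zip_tail_of_forall_le pairwise_rlMaxima (mem_rlMaxima.mpr hx)
      (mem_rlMaxima.mpr hy) hxy fun z hz hxz => ?_, by dsimp only; omega⟩
    by_contra! hzy
    have h1 := Fin.lt_def.mp (hx z hxz)
    have h2 := Fin.lt_def.mp (mem_rlMaxima.mp hz y hzy)
    omega
  · rintro ⟨⟨x, y⟩, hq, hxy : (π x : ℕ) - π y = 1⟩
    have hx := mem_rlMaxima.mp (List.of_mem_zip hq).1
    have hlt := List.rel_of_mem_zip_tail pairwise_rlMaxima hq
    have := Fin.lt_def.mp (hx y hlt)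
    exact ⟨x, y, hlt, hx, by omega⟩

end RightToLeftMaxima

theorem stmt4 (n : ℕ) (π : Equiv.Perm (Fin n)) (h : ¬ Contains213 π) :
    AvoidsBarred231 π ↔ ¬ ([true, false, true] <:+: phi π) := by
  rw [avoidsBarred231_iff_not_hasUnitDrop h, udu_infix_phi_iff,
    hasUnitDrop_iff_exists_mem_zip_tail]
end

section
/- The number of Dyck paths of size n containing no factor UDU equals the Motzkin number M_{n-1}, for n ≥ 1. -/
/-!
Split a nonempty Dyck word at its first return to the axis, `p = U q D r`. When `q` is empty,
`p = U D r` avoids `UDU` only if `r` is empty too. When `q` is nonempty it begins with `U` and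
ends with `D`, so no `UDU` can overlap the outer `U` or the returning `D`. Then `p` avoids `UDU`
exactly when `q` and `r` both do. So the numbers `a n` of `UDU`-avoiding words satisfy
`a 0 = a 1 = 1` and `a (n + 2) = ∑ k < n + 1, a (k + 1) * a (n - k)`. Splitting off the term
`k = n`, this is the Motzkin recurrence shifted by one.
-/

/-- Motzkin numbers: `M 0 = 1`, `M (n+1) = M n + ∑_{k=0}^{n-1} M k * M (n-1-k)`. -/
def motzkin : ℕ → ℕ
  | 0 => 1
  | n + 1 => motzkin n + ∑ k ∈ (Finset.range n).attach,
      motzkin k.1 * motzkin (n - 1 - k.1)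
decreasing_by
  all_goals (try exact Nat.lt_succ_self n)
  all_goals (have := Finset.mem_range.mp k.2; omega)

/-- A Dyck path of size `n`, encoded as a list of booleans (`true` = up-step `U`,
`false` = down-step `D`): length `2n`, `n` up-steps, and every prefix has at least
as many `U`'s as `D`'s. -/
def IsDyckPath (n : ℕ) (l : List Bool) : Prop :=
  l.length = 2 * n ∧ l.count true = n ∧
  ∀ p : List Bool, p <+: l → p.count false ≤ p.count true

open DyckStep

lemma motzkin_succ (n : ℕ) :
    motzkin (n + 1) = motzkin n + ∑ k ∈ Finset.range n, motzkin k * motzkin (n - 1 - k) := by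
  rw [motzkin, Finset.sum_attach (Finset.range n) fun k => motzkin k * motzkin (n - 1 - k)]

lemma List.map_infix_map_iff {α β : Type*} {f : α → β} (hf : Function.Injective f)
    {l₁ l₂ : List α} : l₁.map f <:+: l₂.map f ↔ l₁ <:+: l₂ := by
  refine ⟨fun h => ?_, fun h => h.map f⟩
  obtain ⟨l, hl, heq⟩ := List.infix_map_iff.mp h
  rwa [List.map_injective_iff.mpr hf heq]

section

open List

lemma udu_infix_append_D_iff {x y : List DyckStep} (hx : x.getLast? ≠ some U) :
    [U, D, U] <:+: x ++ D :: y ↔ [U, D, U] <:+: x ∨ [U, D, U] <:+: y := by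
  have straddle : ¬ ∃ l₁ l₂, l₁ ≠ [] ∧ l₂ ≠ [] ∧ [U, D, U] = l₁ ++ l₂ ∧ l₁ <:+ x ∧
      l₂ <+: D :: y := by
    rintro ⟨l₁, _ | ⟨a, l₂⟩, h₁, h₂, hsplit, hx₁, hy₂⟩
    · exact h₂ rfl
    obtain ⟨rfl, -⟩ := cons_prefix_cons.mp hy₂
    rcases l₁ with _ | ⟨b, _ | ⟨c, t⟩⟩
    · exact h₁ rfl
    · obtain ⟨rfl, -⟩ : U = b ∧ _ := by simpa using hsplit
      exact hx (singleton_suffix_iff_getLast?_eq_some.mp hx₁)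
    · simp [cons_eq_append_iff] at hsplit
  have hD : [U, D, U] <:+: D :: y ↔ [U, D, U] <:+: y := by simp [infix_cons_iff]
  rw [infix_append_iff_ne_nil, or_iff_left straddle, hD]

lemma udu_infix_U_cons_iff {x : List DyckStep} (hx : x.head? ≠ some D) :
    [U, D, U] <:+: U :: x ↔ [U, D, U] <:+: x := by
  rw [infix_cons_iff, cons_prefix_cons]
  refine or_iff_right fun ⟨_, h⟩ => hx ?_
  obtain ⟨t, rfl⟩ := h
  rfl

end

namespace DyckWord

open Finset

variable {p q r : DyckWord}

lemma semilength_eq_zero_iff : p.semilength = 0 ↔ p = 0 := by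
  rw [← toList_eq_nil, ← List.length_eq_zero_iff, ← two_mul_semilength_eq_length]
  omega

lemma toList_nest_add (q r : DyckWord) :
    (q.nest + r).toList = U :: q.toList ++ D :: r.toList := by
  show [U] ++ q.toList ++ [D] ++ r.toList = _
  simp

lemma udu_infix_nest_add_iff (hq : q ≠ 0) :
    [U, D, U] <:+: (q.nest + r).toList ↔
      [U, D, U] <:+: q.toList ∨ [U, D, U] <:+: r.toList := by
  have hq' := cons_tail_dropLast_concat hq
  have hlast : (U :: q.toList).getLast? ≠ some U := by
    rw [← hq', ← List.cons_append, List.getLast?_concat]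
    simp
  have hhead : q.toList.head? ≠ some D := by
    rw [← hq']
    simp
  rw [toList_nest_add, udu_infix_append_D_iff hlast, udu_infix_U_cons_iff hhead]

lemma udu_infix_nest_zero_add (hr : r ≠ 0) :
    [U, D, U] <:+: ((0 : DyckWord).nest + r).toList := by
  rw [toList_nest_add, ← cons_tail_dropLast_concat hr]
  exact (List.prefix_append [U, D, U] _).isInfix

lemma not_udu_infix_nest_add_iff :
    ¬ [U, D, U] <:+: (q.nest + r).toList ↔
      q = 0 ∧ r = 0 ∨
        q ≠ 0 ∧ ¬ [U, D, U] <:+: q.toList ∧ ¬ [U, D, U] <:+: r.toList := by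
  by_cases hq : q = 0
  · subst hq
    by_cases hr : r = 0
    · subst hr
      decide
    · simp [udu_infix_nest_zero_add hr, hr]
  · simp [udu_infix_nest_add_iff hq, hq]

def avoidingUDU (n : ℕ) : Finset DyckWord :=
  {p ∈ (univ : Finset {p : DyckWord // p.semilength = n}).map (.subtype _) |
    ¬ [U, D, U] <:+: p.toList}

lemma mem_avoidingUDU {n : ℕ} :
    p ∈ avoidingUDU n ↔ p.semilength = n ∧ ¬ [U, D, U] <:+: p.toList := by
  simp [avoidingUDU]

lemma avoidingUDU_zero : avoidingUDU 0 = {0} := by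
  ext p
  rw [mem_avoidingUDU, semilength_eq_zero_iff, mem_singleton, and_iff_left_iff_imp]
  rintro rfl
  decide

lemma avoidingUDU_one : avoidingUDU 1 = {nest 0} := by
  ext p
  rw [mem_avoidingUDU, mem_singleton]
  constructor
  · rintro ⟨hp, -⟩
    have hp0 : p ≠ 0 := by rintro rfl; simp at hp
    have hsum := semilength_insidePart_add_semilength_outsidePart_add_one hp0
    have hq : p.insidePart = 0 := semilength_eq_zero_iff.mp (by omega)
    have hr : p.outsidePart = 0 := semilength_eq_zero_iff.mp (by omega)
    rw [← nest_insidePart_add_outsidePart hp0, hq, hr, add_zero]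
  · rintro rfl
    exact ⟨rfl, by decide⟩

lemma card_avoidingUDU_add_two (n : ℕ) :
    #(avoidingUDU (n + 2)) =
      ∑ k ∈ range (n + 1), #(avoidingUDU (k + 1)) * #(avoidingUDU (n - k)) := by
  simp_rw [← card_product]
  rw [← card_sigma]
  refine card_nbij' (fun p => ⟨p.insidePart.semilength - 1, p.insidePart, p.outsidePart⟩)
    (fun x => x.2.1.nest + x.2.2) ?_ ?_ ?_ ?_
  · intro p hp
    rw [mem_coe, mem_avoidingUDU] at hp
    obtain ⟨hsl, hfree⟩ := hp
    have hp0 : p ≠ 0 := by rintro rfl; simp at hsl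
    have hsum := semilength_insidePart_add_semilength_outsidePart_add_one hp0
    rw [← nest_insidePart_add_outsidePart hp0, not_udu_infix_nest_add_iff] at hfree
    rcases hfree with ⟨hq, hr⟩ | ⟨hq, hqfree, hrfree⟩
    · simp [hq, hr] at hsum
      omega
    have hqpos : p.insidePart.semilength ≠ 0 := mt semilength_eq_zero_iff.mp hq
    simp only [mem_coe, mem_sigma, mem_range, mem_product, mem_avoidingUDU]
    exact ⟨by omega, ⟨by omega, hqfree⟩, ⟨by omega, hrfree⟩⟩
  · rintro ⟨k, q, r⟩ hx
    simp only [mem_coe, mem_sigma, mem_range, mem_product, mem_avoidingUDU] at hx ⊢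
    obtain ⟨hk, ⟨hq, hqfree⟩, ⟨hr, hrfree⟩⟩ := hx
    have hq0 : q ≠ 0 := by rintro rfl; simp at hq
    refine ⟨?_, not_udu_infix_nest_add_iff.mpr (.inr ⟨hq0, hqfree, hrfree⟩)⟩
    simp only [semilength_add, semilength_nest, hq, hr]
    omega
  · intro p hp
    rw [mem_coe, mem_avoidingUDU] at hp
    exact nest_insidePart_add_outsidePart (by rintro rfl; simp at hp)
  · rintro ⟨k, q, r⟩ hx
    simp only [mem_coe, mem_sigma, mem_product, mem_avoidingUDU] at hx
    simp [insidePart_add, outsidePart_add, insidePart_nest, outsidePart_nest, hx.2.1.1]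

theorem card_avoidingUDU (n : ℕ) : #(avoidingUDU n) = motzkin (n - 1) := by
  induction n using Nat.strong_induction_on with
  | _ n ih =>
  match n with
  | 0 => simp [avoidingUDU_zero, motzkin]
  | 1 => simp [avoidingUDU_one, motzkin]
  | n + 2 =>
    rw [card_avoidingUDU_add_two, sum_range_succ, Nat.sub_self, avoidingUDU_zero, card_singleton,
      mul_one, ih (n + 1) (by omega), show n + 2 - 1 = n + 1 from rfl, motzkin_succ, add_comm]
    refine congrArg _ (sum_congr rfl fun k hk => ?_)
    rw [mem_range] at hk
    rw [ih (k + 1) (by omega), ih (n - k) (by omega), Nat.add_sub_cancel, Nat.sub_right_comm]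

end DyckWord

def DyckStep.equivBool : DyckStep ≃ Bool where
  toFun
    | U => true
    | D => false
  invFun
    | true => U
    | false => D
  left_inv s := by cases s <;> rfl
  right_inv b := by cases b <;> rfl

@[simp] lemma DyckStep.count_true_map_equivBool (w : List DyckStep) :
    (w.map equivBool).count true = w.count U :=
  List.count_map_of_injective w equivBool equivBool.injective U

@[simp] lemma DyckStep.count_false_map_equivBool (w : List DyckStep) :
    (w.map equivBool).count false = w.count D :=
  List.count_map_of_injective w equivBool equivBool.injective D

lemma isDyckPath_map_equivBool_iff {n : ℕ} {w : List DyckStep} :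
    IsDyckPath n (w.map equivBool) ↔
      w.count U = n ∧ w.count U = w.count D ∧
        ∀ i, (w.take i).count D ≤ (w.take i).count U := by
  have hlen := List.count_true_add_count_false (w.map equivBool)
  have hprefix : (∀ l, l <+: w.map equivBool → l.count false ≤ l.count true) ↔
      ∀ i, (w.take i).count D ≤ (w.take i).count U := by
    refine ⟨fun h i => ?_, fun h l hl => ?_⟩
    · simpa [← List.map_take] using h _ (List.take_prefix i _)
    · rw [List.prefix_iff_eq_take.mp hl, ← List.map_take, count_true_map_equivBool,
        count_false_map_equivBool]
      exact h l.length
  simp only [IsDyckPath, hprefix, count_true_map_equivBool, count_false_map_equivBool] at hlen ⊢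
  rw [← hlen]
  constructor <;> rintro ⟨h₁, h₂, h₃⟩ <;> exact ⟨by omega, by omega, h₃⟩

lemma isDyckPath_iff_exists_dyckWord {n : ℕ} {l : List Bool} :
    IsDyckPath n l ↔ ∃ p : DyckWord, p.semilength = n ∧ p.toList.map equivBool = l := by
  constructor
  · intro h
    have hl : (l.map equivBool.symm).map equivBool = l := by simp [List.map_map]
    rw [← hl, isDyckPath_map_equivBool_iff] at h
    exact ⟨⟨_, h.2.1, h.2.2⟩, h.1, hl⟩
  · rintro ⟨p, rfl, rfl⟩
    exact isDyckPath_map_equivBool_iff.mpr ⟨rfl, p.count_U_eq_count_D, p.count_D_le_count_U⟩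

lemma setOf_isDyckPath_not_infix_eq_image (n : ℕ) :
    {l : List Bool | IsDyckPath n l ∧ ¬ ([true, false, true] <:+: l)} =
      (fun p : DyckWord => p.toList.map equivBool) '' DyckWord.avoidingUDU n := by
  ext l
  simp only [Set.mem_ofPred_eq, isDyckPath_iff_exists_dyckWord, Set.mem_image, Finset.mem_coe,
    DyckWord.mem_avoidingUDU]
  constructor
  · rintro ⟨⟨p, hp, rfl⟩, hfree⟩
    exact ⟨p, ⟨hp, fun h => hfree (h.map equivBool)⟩, rfl⟩
  · rintro ⟨p, ⟨hp, hfree⟩, rfl⟩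
    exact ⟨⟨p, hp, rfl⟩, fun h => hfree ((List.map_infix_map_iff equivBool.injective).mp h)⟩

theorem stmt5_general (n : ℕ) :
    Set.ncard {l : List Bool | IsDyckPath n l ∧ ¬ ([true, false, true] <:+: l)}
      = motzkin (n - 1) := by
  have hinj : Function.Injective fun p : DyckWord => p.toList.map equivBool :=
    fun p q h => DyckWord.ext (List.map_injective_iff.mpr equivBool.injective h)
  rw [setOf_isDyckPath_not_infix_eq_image, Set.ncard_image_of_injective _ hinj,
    Set.ncard_coe_finset, DyckWord.card_avoidingUDU]

theorem stmt5 (n : ℕ) (hn : 1 ≤ n) :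
    Set.ncard {l : List Bool | IsDyckPath n l ∧ ¬ ([true, false, true] <:+: l)}
      = motzkin (n - 1) :=
  stmt5_general n
end
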